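/- Let Σ ⊂ ℝ^{n-1} be a bounded domain with least Dirichlet eigenvalue α₀ > 0, let β ∈ (0, √α₀), ξ ∈ ℝ, and let λ ∈ ℂ satisfy Re λ > −(Im λ)²/(4β²) − α₀ + β² and Im λ + 2ξβ = 0. Then there exists a constant l = l(λ, ξ, β) > 0 such that for all u ∈ W^{1,2}_0(Σ), |∫_Σ ((λ + (ξ+iβ)²)|u|² + |∇'u|²) dx'| ≥ l ‖∇'u‖²_{L²(Σ)}. -/

import Mathlib

/-!
The condition `Im λ + 2ξβ = 0` makes `λ + (ξ + iβ)²` the real number `c = Re λ + ξ² - β²`,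
and since then `(Im λ)² / (4β²) ≤ ξ²`, the condition on `Re λ` gives `c > -α₀`. The form is
therefore `c ‖u‖² + ‖∇u‖²`, and the Poincaré inequality `α₀ ‖u‖² ≤ ‖∇u‖²` bounds it below by
`min 1 (1 + c / α₀) · ‖∇u‖²`.
-/

open MeasureTheory

lemma add_ofReal_add_mul_I_sq_eq_ofReal (lam : ℂ) (ξ β : ℝ) (him : lam.im + 2 * ξ * β = 0) :
    lam + ((ξ : ℂ) + (β : ℂ) * Complex.I) ^ 2 = ((lam.re + ξ ^ 2 - β ^ 2 : ℝ) : ℂ) :=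
  Complex.ext (by simp [sq, add_sub_assoc]) (by simp [sq]; linarith)

lemma sq_div_four_mul_sq_le_sq {a ξ β : ℝ} (h : a + 2 * ξ * β = 0) :
    a ^ 2 / (4 * β ^ 2) ≤ ξ ^ 2 :=
  div_le_of_le_mul₀ (by positivity) (sq_nonneg ξ) <|
    le_of_eq (by rw [show a = -(2 * ξ * β) by linarith]; ring)

lemma exists_pos_mul_le_of_poincare {α₀ c : ℝ} (hα₀ : 0 < α₀) (hc : -α₀ < c) :
    ∃ l : ℝ, 0 < l ∧ ∀ M D : ℝ, 0 ≤ M → α₀ * M ≤ D → l * D ≤ c * M + D := by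
  refine ⟨min 1 (1 + c / α₀), lt_min one_pos ?_, fun M D hM hP => ?_⟩
  · have : -1 < c / α₀ := by rwa [lt_div_iff₀ hα₀, neg_one_mul]
    linarith
  have hD : 0 ≤ D := (mul_nonneg hα₀.le hM).trans hP
  rcases le_or_gt 0 c with hc₀ | hc₀
  · calc min 1 (1 + c / α₀) * D ≤ 1 * D := by gcongr; exact min_le_left _ _
      _ ≤ c * M + D := by nlinarith
  · have hMD : M ≤ D / α₀ := (le_div_iff₀' hα₀).mpr hP
    calc min 1 (1 + c / α₀) * D ≤ (1 + c / α₀) * D := by gcongr; exact min_le_right _ _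
      _ = c * (D / α₀) + D := by ring
      _ ≤ c * M + D := by gcongr ?_ + D; exact mul_le_mul_of_nonpos_left hMD hc₀.le

theorem coercivity_parametrized_form_general (m : ℕ) (S : Set (Fin m → ℝ))
    (α₀ : ℝ) (hα₀ : 0 < α₀)
    (hPoincare : ∀ v : (Fin m → ℝ) → ℂ, ContDiff ℝ 1 v → HasCompactSupport v →
      tsupport v ⊆ S →
      α₀ * ∫ x in S, ‖v x‖ ^ 2 ≤ ∫ x in S, ‖fderiv ℝ v x‖ ^ 2)
    (β ξ : ℝ) (lam : ℂ)
    (hre : lam.re > -(lam.im) ^ 2 / (4 * β ^ 2) - α₀ + β ^ 2)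
    (him : lam.im + 2 * ξ * β = 0) :
    ∃ l : ℝ, 0 < l ∧
      ∀ u : (Fin m → ℝ) → ℂ, ContDiff ℝ 1 u → HasCompactSupport u → tsupport u ⊆ S →
        l * ∫ x in S, ‖fderiv ℝ u x‖ ^ 2 ≤
          ‖(lam + ((ξ : ℂ) + (β : ℂ) * Complex.I) ^ 2) *
              ((∫ x in S, ‖u x‖ ^ 2 : ℝ) : ℂ) +
            ((∫ x in S, ‖fderiv ℝ u x‖ ^ 2 : ℝ) : ℂ)‖ := by
  have hc : -α₀ < lam.re + ξ ^ 2 - β ^ 2 := by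
    have := sq_div_four_mul_sq_le_sq him
    rw [neg_div] at hre
    linarith
  obtain ⟨l, hl, hcoer⟩ := exists_pos_mul_le_of_poincare hα₀ hc
  refine ⟨l, hl, fun u hu hsupp hS => ?_⟩
  rw [add_ofReal_add_mul_I_sq_eq_ofReal lam ξ β him, ← Complex.ofReal_mul, ← Complex.ofReal_add,
    Complex.norm_real, Real.norm_eq_abs]
  exact (hcoer _ _ (integral_nonneg fun x => by positivity) (hPoincare u hu hsupp hS)).trans
    (le_abs_self _)

/-- coercivity of the parametrized bilinear form. For `β ∈ (0,√α₀)`,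
`ξ ∈ ℝ`, `λ ∈ ℂ` with `Re λ > −(Im λ)²/(4β²) − α₀ + β²` and `Im λ + 2ξβ = 0`, there is
`l = l(λ,ξ,β) > 0` with `|∫_Σ ((λ+(ξ+iβ)²)|u|² + |∇'u|²)| ≥ l‖∇'u‖₂²` for all
`u ∈ W^{1,2}₀(Σ)`. -/
theorem coercivity_parametrized_form (m : ℕ) (S : Set (Fin m → ℝ))
    (hSopen : IsOpen S) (hSconn : IsConnected S) (hSbdd : Bornology.IsBounded S)
    (α₀ : ℝ) (hα₀ : 0 < α₀)
    (hPoincare : ∀ v : (Fin m → ℝ) → ℂ, ContDiff ℝ 1 v → HasCompactSupport v →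
      tsupport v ⊆ S →
      α₀ * ∫ x in S, ‖v x‖ ^ 2 ≤ ∫ x in S, ‖fderiv ℝ v x‖ ^ 2)
    (β ξ : ℝ) (hβ : 0 < β) (hβ' : β < Real.sqrt α₀) (lam : ℂ)
    (hre : lam.re > -(lam.im) ^ 2 / (4 * β ^ 2) - α₀ + β ^ 2)
    (him : lam.im + 2 * ξ * β = 0) :
    ∃ l : ℝ, 0 < l ∧
      ∀ u : (Fin m → ℝ) → ℂ, ContDiff ℝ 1 u → HasCompactSupport u → tsupport u ⊆ S →
        l * ∫ x in S, ‖fderiv ℝ u x‖ ^ 2 ≤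
          ‖(lam + ((ξ : ℂ) + (β : ℂ) * Complex.I) ^ 2) *
              ((∫ x in S, ‖u x‖ ^ 2 : ℝ) : ℂ) +
            ((∫ x in S, ‖fderiv ℝ u x‖ ^ 2 : ℝ) : ℂ)‖ :=
  coercivity_parametrized_form_general m S α₀ hα₀ hPoincare β ξ lam hre him
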